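/- arXiv:1706.03564 — 2 statements merged into one kernel-verified Lean document; each statement's English description precedes it below -/
import Mathlib

section
/- Let τ > 0, ρ > 0, M₀ > 0 and 0 ≤ A < ρ. Define T* := τ M₀ / (ρ − A), w(t) := max(M₀ − ((ρ − A)/τ) t, 0) for t ≥ 0, and η(t) := 1 if t < T* and η(t) := A/ρ if t ≥ T*. Then: (i) w(0) = M₀ and w is Lipschitz continuous on [0, ∞); (ii) η(t) ∈ sign(w(t)) for every t ≥ 0; (iii) for every t ≥ 0 with t ≠ T*, w is differentiable at t and τ w'(t) + ρ η(t) = A; (iv) w(t) = 0 for every t ≥ T*, and w(t) > 0 for every t ∈ [0, T*). -/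
/-- The set-valued sign operator: `sign r = {r/|r|}` for `r ≠ 0`, `sign 0 = [-1,1]`. -/
noncomputable def signSet (r : ℝ) : Set ℝ :=
  if r = 0 then Set.Icc (-1 : ℝ) 1 else {r / |r|}

/-!
The solution is the affine function `M₀ - ((ρ - A)/τ) t` cut off at `0`, a "ramp" that reaches
zero exactly at `T* = M₀ / ((ρ - A)/τ)`. Before `T*` it is positive, so its sign is `1` and
`τ w' = -(ρ - A)`; after `T*` it vanishes, so the equation reduces to `ρ η = A`, and
`η = A/ρ ∈ [-1, 1]` is an admissible value of the sign at `0` because `0 ≤ A < ρ`.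
-/

lemma one_mem_signSet_of_pos {r : ℝ} (hr : 0 < r) : 1 ∈ signSet r := by
  rw [signSet, if_neg hr.ne', abs_of_pos hr, div_self hr.ne']
  exact Set.mem_singleton 1

lemma signSet_zero : signSet 0 = Set.Icc (-1) 1 := if_pos rfl

def ramp (M c t : ℝ) : ℝ := max (M - c * t) 0

section Ramp

variable {M c t : ℝ}

lemma ramp_zero : ramp M c 0 = max M 0 := by simp [ramp]

lemma ramp_pos_iff (hc : 0 < c) : 0 < ramp M c t ↔ t < M / c := by
  rw [ramp, lt_max_iff, lt_div_iff₀ hc, sub_pos, mul_comm]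
  simp

lemma ramp_eq_of_lt (hc : 0 < c) (ht : t < M / c) : ramp M c t = M - c * t := by
  rw [lt_div_iff₀ hc, mul_comm] at ht
  exact max_eq_left (sub_pos.2 ht).le

lemma ramp_eq_zero_of_le (hc : 0 < c) (ht : M / c ≤ t) : ramp M c t = 0 :=
  le_antisymm (not_lt.1 fun h => ((ramp_pos_iff hc).1 h).not_ge ht) (le_max_right _ _)

lemma lipschitzWith_ramp (M c : ℝ) : LipschitzWith ‖c‖₊ (ramp M c) := by
  have hlin : LipschitzWith ‖c‖₊ fun t : ℝ => M - c * t :=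
    LipschitzWith.of_dist_le_mul fun x y => by
      rw [Real.dist_eq, Real.dist_eq, sub_sub_sub_cancel_left, ← mul_sub, abs_mul, abs_sub_comm]
      rfl
  exact hlin.max_const 0

lemma hasDerivAt_ramp_of_lt (hc : 0 < c) (ht : t < M / c) : HasDerivAt (ramp M c) (-c) t := by
  have hlin : HasDerivAt (fun s => M - c * s) (-c) t := by
    simpa using ((hasDerivAt_id t).const_mul c).const_sub M
  exact hlin.congr_of_eventuallyEq
    (Filter.eventually_of_mem (Iio_mem_nhds ht) fun s hs => ramp_eq_of_lt hc hs)

lemma hasDerivAt_ramp_of_gt (hc : 0 < c) (ht : M / c < t) : HasDerivAt (ramp M c) 0 t :=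
  (hasDerivAt_const t 0).congr_of_eventuallyEq
    (Filter.eventually_of_mem (Ioi_mem_nhds ht) fun _ hs => ramp_eq_zero_of_le hc hs.le)

end Ramp

/-- Let `τ, ρ, M₀ > 0` and `0 ≤ A < ρ`, and set `T* = τ M₀ / (ρ - A)`,
`w(t) = max (M₀ - ((ρ - A)/τ) t) 0` and `η(t) = 1` for `t < T*`, `η(t) = A/ρ`
for `t ≥ T*`.  Then: (i) `w(0) = M₀` and `w` is Lipschitz on `[0, ∞)`;
(ii) `η(t) ∈ sign(w(t))` for all `t ≥ 0`; (iii) for every `t ≥ 0` with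
`t ≠ T*`, `w` is differentiable at `t` with `τ w'(t) + ρ η(t) = A`;
(iv) `w(t) = 0` for `t ≥ T*` and `w(t) > 0` for `0 ≤ t < T*`. -/
theorem auxiliary_sliding_ode_solution
    (τ ρ M₀ A : ℝ) (hτ : 0 < τ) (hρ : 0 < ρ) (hM₀ : 0 < M₀)
    (hA0 : 0 ≤ A) (hAρ : A < ρ)
    (Tstar : ℝ) (hTstar : Tstar = τ * M₀ / (ρ - A))
    (w : ℝ → ℝ) (hw : ∀ t, w t = max (M₀ - ((ρ - A) / τ) * t) 0)
    (η : ℝ → ℝ) (hη : ∀ t, η t = if t < Tstar then 1 else A / ρ) :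
    (w 0 = M₀ ∧ ∃ K : NNReal, LipschitzOnWith K w (Set.Ici 0)) ∧
    (∀ t : ℝ, 0 ≤ t → η t ∈ signSet (w t)) ∧
    (∀ t : ℝ, 0 ≤ t → t ≠ Tstar →
      ∃ d : ℝ, HasDerivAt w d t ∧ τ * d + ρ * η t = A) ∧
    ((∀ t : ℝ, Tstar ≤ t → w t = 0) ∧ ∀ t : ℝ, 0 ≤ t → t < Tstar → 0 < w t) := by
  set c := (ρ - A) / τ with hc_def
  have hc : 0 < c := div_pos (sub_pos.2 hAρ) hτ
  obtain rfl : Tstar = M₀ / c := by rw [hTstar, div_div_eq_mul_div, mul_comm]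
  obtain rfl : w = ramp M₀ c := funext hw
  refine ⟨⟨by rw [ramp_zero, max_eq_left hM₀.le], _,
      (lipschitzWith_ramp M₀ c).lipschitzOnWith⟩, fun t _ => ?_, fun t _ ht => ?_,
    fun t => ramp_eq_zero_of_le hc, fun t _ => (ramp_pos_iff hc).2⟩
  · rw [hη]
    split_ifs with h
    · exact one_mem_signSet_of_pos ((ramp_pos_iff hc).2 h)
    · rw [ramp_eq_zero_of_le hc (not_lt.1 h), signSet_zero]
      exact ⟨by linarith [div_nonneg hA0 hρ.le], (div_le_one hρ).2 hAρ.le⟩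
  · rcases ht.lt_or_gt with h | h
    · refine ⟨-c, hasDerivAt_ramp_of_lt hc h, ?_⟩
      rw [hη, if_pos h, hc_def]
      field_simp
      ring
    · refine ⟨0, hasDerivAt_ramp_of_gt hc h, ?_⟩
      rw [hη, if_neg h.not_gt, mul_div_cancel₀ A hρ.ne']
      ring
end

section
/- Let τ > 0, ρ > 0, A ∈ ℝ and T > 0. Suppose w₁, w₂ : [0, T] → ℝ are Lipschitz continuous with w₁(0) = w₂(0), and suppose there exist measurable functions η₁, η₂ : [0, T] → ℝ such that, for i = 1, 2 and for almost every t ∈ [0, T], ηᵢ(t) ∈ sign(wᵢ(t)), wᵢ is differentiable at t, and τ wᵢ'(t) + ρ ηᵢ(t) = A. Then w₁(t) = w₂(t) for every t ∈ [0, T]. (Uniqueness of the auxiliary sliding ODE, following from the monotonicity of sign.) -/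
open MeasureTheory

/-! The difference `d = w₁ - w₂` of two solutions is Lipschitz, hence absolutely continuous, so
`d(t)² - d(0)² = ∫₀ᵗ 2 d d'`. Subtracting the two equations gives `τ d' = -ρ (η₁ - η₂)`, and
monotonicity of `sign` makes `d (η₁ - η₂) ≥ 0`; hence `d d' ≤ 0` a.e. and `d(t)² ≤ d(0)² = 0`. -/

theorem mem_signSet_iff {x a : ℝ} : a ∈ signSet x ↔ |a| ≤ 1 ∧ a * x = |x| := by
  unfold signSet
  split_ifs with hx
  · simp [hx, abs_le]
  · have hx' : |x| ≠ 0 := abs_ne_zero.2 hx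
    constructor
    · rintro rfl
      refine ⟨by rw [abs_div, abs_abs, div_self hx'], ?_⟩
      rw [div_mul_eq_mul_div, ← abs_mul_abs_self x, mul_div_assoc, div_self hx', mul_one]
    · rintro ⟨-, h⟩
      rw [Set.mem_singleton_iff, eq_div_iff hx']
      rcases lt_or_gt_of_ne hx with hneg | hpos
      · rw [abs_of_neg hneg] at h ⊢
        linear_combination -h
      · rwa [abs_of_pos hpos] at h ⊢

theorem signSet_monotone {x y a b : ℝ} (ha : a ∈ signSet x) (hb : b ∈ signSet y) :
    0 ≤ (x - y) * (a - b) := by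
  obtain ⟨ha1, hax⟩ := mem_signSet_iff.1 ha
  obtain ⟨hb1, hby⟩ := mem_signSet_iff.1 hb
  have hay : a * y ≤ |y| := (le_abs_self _).trans <| by
    rw [abs_mul]; exact mul_le_of_le_one_left (abs_nonneg y) ha1
  have hbx : b * x ≤ |x| := (le_abs_self _).trans <| by
    rw [abs_mul]; exact mul_le_of_le_one_left (abs_nonneg x) hb1
  nlinarith

theorem sub_mul_sub_nonpos_of_mem_signSet {τ ρ A x₁ x₂ v₁ v₂ η₁ η₂ : ℝ} (hτ : 0 < τ)
    (hρ : 0 ≤ ρ) (hη₁ : η₁ ∈ signSet x₁) (hη₂ : η₂ ∈ signSet x₂)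
    (h₁ : τ * v₁ + ρ * η₁ = A) (h₂ : τ * v₂ + ρ * η₂ = A) :
    (x₁ - x₂) * (v₁ - v₂) ≤ 0 := by
  have hmono := mul_nonneg hρ (signSet_monotone hη₁ hη₂)
  have key : τ * ((x₁ - x₂) * (v₁ - v₂)) = -(ρ * ((x₁ - x₂) * (η₁ - η₂))) := by
    linear_combination (x₁ - x₂) * (h₁ - h₂)
  exact nonpos_of_mul_nonpos_right (by linarith) hτ

theorem AbsolutelyContinuousOnInterval.abs_le_of_ae_mul_deriv_nonpos {f : ℝ → ℝ} {a b : ℝ}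
    (hf : AbsolutelyContinuousOnInterval f a b) (hab : a ≤ b)
    (h : ∀ᵐ x ∂volume.restrict (Set.Icc a b), f x * deriv f x ≤ 0) :
    |f b| ≤ |f a| := by
  have hint : 0 ≤ ∫ x in a..b, -(deriv f x * f x + f x * deriv f x) :=
    intervalIntegral.integral_nonneg_of_ae_restrict hab <| by
      filter_upwards [h] with x hx
      simp only [Pi.zero_apply]
      linarith [mul_comm (f x) (deriv f x)]
  rw [intervalIntegral.integral_neg, hf.integral_deriv_mul_eq_sub hf] at hint
  exact sq_le_sq.1 (by nlinarith)

theorem auxiliary_sliding_ode_uniqueness_general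
    (τ ρ A T : ℝ) (hτ : 0 < τ) (hρ : 0 < ρ)
    (w₁ w₂ η₁ η₂ : ℝ → ℝ)
    (hw₁lip : ∃ K : NNReal, LipschitzOnWith K w₁ (Set.Icc 0 T))
    (hw₂lip : ∃ K : NNReal, LipschitzOnWith K w₂ (Set.Icc 0 T))
    (hinit : w₁ 0 = w₂ 0)
    (hae₁ : ∀ᵐ t ∂(volume.restrict (Set.Icc 0 T)),
      η₁ t ∈ signSet (w₁ t) ∧ DifferentiableAt ℝ w₁ t ∧
        τ * deriv w₁ t + ρ * η₁ t = A)
    (hae₂ : ∀ᵐ t ∂(volume.restrict (Set.Icc 0 T)),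
      η₂ t ∈ signSet (w₂ t) ∧ DifferentiableAt ℝ w₂ t ∧
        τ * deriv w₂ t + ρ * η₂ t = A) :
    ∀ t ∈ Set.Icc (0 : ℝ) T, w₁ t = w₂ t := by
  intro t ht
  obtain ⟨K₁, hK₁⟩ := hw₁lip
  obtain ⟨K₂, hK₂⟩ := hw₂lip
  have hsub : Set.uIcc 0 t ⊆ Set.Icc 0 T := by
    rw [Set.uIcc_of_le ht.1]; exact Set.Icc_subset_Icc_right ht.2
  have hac : AbsolutelyContinuousOnInterval (w₁ - w₂) 0 t :=
    ((hK₁.sub hK₂).mono hsub).absolutelyContinuousOnInterval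
  have hdiss : ∀ᵐ x ∂volume.restrict (Set.Icc 0 t),
      (w₁ - w₂) x * deriv (w₁ - w₂) x ≤ 0 := by
    filter_upwards [ae_restrict_of_ae_restrict_of_subset (Set.Icc_subset_Icc_right ht.2)
      (hae₁.and hae₂)] with x ⟨⟨hη₁, hd₁, h₁⟩, hη₂, hd₂, h₂⟩
    rw [deriv_sub hd₁ hd₂]
    exact sub_mul_sub_nonpos_of_mem_signSet hτ hρ.le hη₁ hη₂ h₁ h₂
  have := hac.abs_le_of_ae_mul_deriv_nonpos ht.1 hdiss
  simp only [Pi.sub_apply, hinit, sub_self, abs_zero] at this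
  exact sub_eq_zero.1 (abs_nonpos_iff.1 this)

/-- Uniqueness for the auxiliary sliding ODE `τ w' + ρ η = A`, `η ∈ sign w`:
if `w₁, w₂` are Lipschitz on `[0, T]` with the same initial value and each
solves the differential inclusion a.e. on `[0, T]`, then `w₁ = w₂` on `[0, T]`.
(This follows from the monotonicity of `sign`.) -/
theorem auxiliary_sliding_ode_uniqueness
    (τ ρ A T : ℝ) (hτ : 0 < τ) (hρ : 0 < ρ) (hT : 0 < T)
    (w₁ w₂ η₁ η₂ : ℝ → ℝ)
    (hw₁lip : ∃ K : NNReal, LipschitzOnWith K w₁ (Set.Icc 0 T))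
    (hw₂lip : ∃ K : NNReal, LipschitzOnWith K w₂ (Set.Icc 0 T))
    (hinit : w₁ 0 = w₂ 0)
    (hη₁meas : Measurable η₁) (hη₂meas : Measurable η₂)
    (hae₁ : ∀ᵐ t ∂(volume.restrict (Set.Icc 0 T)),
      η₁ t ∈ signSet (w₁ t) ∧ DifferentiableAt ℝ w₁ t ∧
        τ * deriv w₁ t + ρ * η₁ t = A)
    (hae₂ : ∀ᵐ t ∂(volume.restrict (Set.Icc 0 T)),
      η₂ t ∈ signSet (w₂ t) ∧ DifferentiableAt ℝ w₂ t ∧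
        τ * deriv w₂ t + ρ * η₂ t = A) :
    ∀ t ∈ Set.Icc (0 : ℝ) T, w₁ t = w₂ t :=
  auxiliary_sliding_ode_uniqueness_general τ ρ A T hτ hρ w₁ w₂ η₁ η₂ hw₁lip hw₂lip hinit hae₁ hae₂
end
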